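/- Let l ≥ 1 and let a, b, c : ℤ → ℂ be l-periodic sequences. Let p be an integer, let T = tr A_l(p), and assume det A_l(p) = 0 (equivalently Π_{j=1}^{l} b_{p+j−1}·c_{p+j−1} = 0). Then for every integer m ≥ 1, K_{lm}(p) = T^{m−1}·K_l(p) and K_{lm−1}(p+1) = T^{m−1}·K_{l−1}(p+1). -/

import Mathlib

/-- The continuant `K_n(p)` of the sequences `a b c : ℤ → ℂ`: the determinant of the
`n × n` tridiagonal matrix with diagonal `a_p, …, a_{p+n-1}`, superdiagonal
`b_p, …, b_{p+n-2}` and subdiagonal `c_p, …, c_{p+n-2}`; it equals `1` for `n = 0`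
and `0` for `n < 0`. -/
noncomputable def contK (a b c : ℤ → ℂ) (p n : ℤ) : ℂ :=
  if n < 0 then 0 else
    Matrix.det (Matrix.of fun i j : Fin n.toNat =>
      if (i : ℕ) = (j : ℕ) then a (p + (i : ℕ))
      else if (i : ℕ) + 1 = (j : ℕ) then b (p + (i : ℕ))
      else if (i : ℕ) = (j : ℕ) + 1 then c (p + (j : ℕ))
      else 0)

/-- The 2×2 matrix `L(α, β)` with first row `(α, β)` and second row `(1, 0)`. -/
def Lmat (α β : ℂ) : Matrix (Fin 2) (Fin 2) ℂ := !![α, β; 1, 0]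

/-- `A_n(p) = L(a_p, −b_p c_p) ⋯ L(a_{p+n−1}, −b_{p+n−1} c_{p+n−1})`. -/
noncomputable def Amat (a b c : ℤ → ℂ) (p : ℤ) (n : ℕ) : Matrix (Fin 2) (Fin 2) ℂ :=
  ((List.range n).map (fun i => Lmat (a (p + (i : ℕ))) (-(b (p + (i : ℕ)) * c (p + (i : ℕ)))))).prod

/-! The first column of `A_n(p)` is `(K_n(p), K_{n-1}(p+1))`, since both satisfy the three-term
recurrence obtained by expanding the tridiagonal determinant along its first row. Periodicity gives
`A_{lm}(p) = A_l(p)^m`, and by Cayley–Hamilton a `2 × 2` matrix `A` with `det A = 0` satisfies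
`A² = (tr A) A`, hence `A^m = T^{m-1} A`. Comparing first columns gives both identities. -/

theorem Matrix.sq_eq_trace_smul_of_det_eq_zero {R : Type*} [CommRing R]
    (M : Matrix (Fin 2) (Fin 2) R) (h : M.det = 0) : M ^ 2 = M.trace • M := by
  nontriviality R
  have := M.aeval_self_charpoly
  rw [charpoly_fin_two] at this
  simpa [h, sub_eq_zero, Algebra.smul_def] using this

theorem pow_succ_eq_smul_of_sq_eq_smul {R A : Type*} [CommSemiring R] [Semiring A] [Algebra R A]
    {x : A} {t : R} (h : x ^ 2 = t • x) (m : ℕ) : x ^ (m + 1) = t ^ m • x := by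
  induction m with
  | zero => simp
  | succ m ih => rw [pow_succ, ih, smul_mul_assoc, ← sq, h, smul_smul, pow_succ]

section Continuant

open Matrix

variable (a b c : ℤ → ℂ)

def tridiag (p : ℤ) (n : ℕ) : Matrix (Fin n) (Fin n) ℂ :=
  of fun i j =>
    if (i : ℕ) = (j : ℕ) then a (p + (i : ℕ))
    else if (i : ℕ) + 1 = (j : ℕ) then b (p + (i : ℕ))
    else if (i : ℕ) = (j : ℕ) + 1 then c (p + (j : ℕ))
    else 0

theorem contK_natCast (p : ℤ) (n : ℕ) : contK a b c p n = (tridiag a b c p n).det := by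
  simp [contK, tridiag]

theorem contK_of_neg {p n : ℤ} (h : n < 0) : contK a b c p n = 0 := by
  simp [contK, h]

theorem contK_zero (p : ℤ) : contK a b c p 0 = 1 := by
  simpa using contK_natCast a b c p 0

theorem contK_one (p : ℤ) : contK a b c p 1 = a p := by
  simpa [tridiag] using contK_natCast a b c p 1

theorem tridiag_submatrix_succ (p : ℤ) (n : ℕ) :
    (tridiag a b c p (n + 1)).submatrix Fin.succ Fin.succ = tridiag a b c (p + 1) n := by
  ext i j
  simp only [tridiag, submatrix_apply, of_apply, Fin.val_succ, Nat.cast_succ,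
    add_left_inj, ← add_assoc, add_right_comm p 1]

theorem det_tridiag_add_two (p : ℤ) (n : ℕ) :
    (tridiag a b c p (n + 2)).det =
      a p * (tridiag a b c (p + 1) (n + 1)).det - b p * c p * (tridiag a b c (p + 2) n).det := by
  set M := tridiag a b c p (n + 2)
  -- the minor of the entry `b p` has first column `(c p, 0, …, 0)`
  have minor_one : (M.submatrix Fin.succ (Fin.succAbove 1)).det =
      c p * (tridiag a b c (p + 2) n).det := by
    rw [det_succ_column_zero, Fin.sum_univ_succ, Finset.sum_eq_zero]
    · have hcols : Fin.succAbove (1 : Fin (n + 2)) ∘ Fin.succ = Fin.succ ∘ Fin.succ :=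
        funext Fin.one_succAbove_succ
      rw [submatrix_submatrix, Fin.succAbove_zero, hcols, ← submatrix_submatrix,
        tridiag_submatrix_succ, tridiag_submatrix_succ, show p + 1 + 1 = p + 2 by ring]
      simp [M, tridiag]
    · intro i _
      simp [M, tridiag]
  rw [det_succ_row_zero, Fin.sum_univ_succ, Fin.sum_univ_succ, Finset.sum_eq_zero,
    Fin.succAbove_zero, tridiag_submatrix_succ, Fin.succ_zero_eq_one, minor_one]
  · simp [M, tridiag]
    ring
  · intro j _
    simp [M, tridiag]

theorem contK_succ (p : ℤ) (n : ℕ) :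
    contK a b c p (n + 1) =
      a p * contK a b c (p + 1) n - b p * c p * contK a b c (p + 2) (n - 1) := by
  cases n with
  | zero => simp [contK_one, contK_zero, contK_of_neg]
  | succ n =>
    rw [show ((n + 1 : ℕ) : ℤ) + 1 = ((n + 2 : ℕ) : ℤ) by push_cast; ring,
      show ((n + 1 : ℕ) : ℤ) - 1 = n by push_cast; ring,
      contK_natCast, contK_natCast, contK_natCast, det_tridiag_add_two]

theorem Amat_zero (p : ℤ) : Amat a b c p 0 = 1 := rfl

theorem Amat_add (p : ℤ) (k n : ℕ) :
    Amat a b c p (k + n) = Amat a b c p k * Amat a b c (p + k) n := by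
  simp only [Amat, List.range_add, List.map_append, List.prod_append, List.map_map,
    Function.comp_def, Nat.cast_add, add_assoc]

theorem Amat_succ (p : ℤ) (n : ℕ) :
    Amat a b c p (n + 1) = Lmat (a p) (-(b p * c p)) * Amat a b c (p + 1) n := by
  rw [add_comm, Amat_add]
  simp [Amat]

theorem Lmat_mulVec (α β x y : ℂ) : Lmat α β *ᵥ ![x, y] = ![α * x + β * y, x] := by
  ext i
  fin_cases i <;> simp [Lmat, mul_comm]

theorem Amat_mulVec_single (p : ℤ) (n : ℕ) :
    Amat a b c p n *ᵥ ![1, 0] = ![contK a b c p n, contK a b c (p + 1) (n - 1)] := by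
  induction n generalizing p with
  | zero => simp [Amat_zero, contK_zero, contK_of_neg]
  | succ n ih =>
    rw [Amat_succ, ← mulVec_mulVec, ih, Lmat_mulVec, Nat.cast_succ, contK_succ,
      add_sub_cancel_right, add_assoc, one_add_one_eq_two]
    congr 1
    ring

variable {a b c}

theorem Amat_add_period {l : ℕ} (ha : Function.Periodic a l) (hb : Function.Periodic b l)
    (hc : Function.Periodic c l) (p : ℤ) (n : ℕ) : Amat a b c (p + l) n = Amat a b c p n := by
  simp only [Amat, add_right_comm p (l : ℤ), ha _, hb _, hc _]

theorem Amat_mul_eq_pow {l : ℕ} (ha : Function.Periodic a l) (hb : Function.Periodic b l)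
    (hc : Function.Periodic c l) (p : ℤ) (m : ℕ) : Amat a b c p (l * m) = Amat a b c p l ^ m := by
  induction m with
  | zero => exact Amat_zero a b c p
  | succ m ih => rw [mul_add_one, add_comm, Amat_add, Amat_add_period ha hb hc, ih, pow_succ']

end Continuant

theorem contK_periodic_det_zero_general (l : ℕ) (a b c : ℤ → ℂ)
    (ha : ∀ k : ℤ, a (k + l) = a k) (hb : ∀ k : ℤ, b (k + l) = b k)
    (hc : ∀ k : ℤ, c (k + l) = c k) (p : ℤ) (T : ℂ)
    (hT : T = (Amat a b c p l).trace) (hD0 : (Amat a b c p l).det = 0)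
    (m : ℕ) (hm : 1 ≤ m) :
    contK a b c p ((l : ℤ) * m) = T ^ (m - 1) * contK a b c p (l : ℤ) ∧
    contK a b c (p + 1) ((l : ℤ) * m - 1) =
      T ^ (m - 1) * contK a b c (p + 1) ((l : ℤ) - 1) := by
  obtain ⟨k, rfl⟩ := Nat.exists_eq_add_of_le' hm
  have hpow : Amat a b c p (l * (k + 1)) = T ^ k • Amat a b c p l := by
    rw [Amat_mul_eq_pow ha hb hc, hT]
    exact pow_succ_eq_smul_of_sq_eq_smul (Matrix.sq_eq_trace_smul_of_det_eq_zero _ hD0) k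
  have hcol := congrArg (Matrix.mulVec · ![1, 0]) hpow
  simp only [Matrix.smul_mulVec, Amat_mulVec_single] at hcol
  push_cast at hcol
  exact ⟨by simpa using congrFun hcol 0, by simpa using congrFun hcol 1⟩

/-- Periodic continuants (zero determinant case): for `l`-periodic sequences, with
`T = tr A_l(p)` and `det A_l(p) = 0` (equivalently `Π_{j=1}^{l} b_{p+j−1} c_{p+j−1} = 0`),
one has `K_{lm}(p) = T^{m−1}·K_l(p)` and `K_{lm−1}(p+1) = T^{m−1}·K_{l−1}(p+1)`
for all `m ≥ 1`. -/
theorem contK_periodic_det_zero (l : ℕ) (hl : 1 ≤ l) (a b c : ℤ → ℂ)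
    (ha : ∀ k : ℤ, a (k + l) = a k) (hb : ∀ k : ℤ, b (k + l) = b k)
    (hc : ∀ k : ℤ, c (k + l) = c k) (p : ℤ) (T : ℂ)
    (hT : T = (Amat a b c p l).trace) (hD0 : (Amat a b c p l).det = 0)
    (m : ℕ) (hm : 1 ≤ m) :
    contK a b c p ((l : ℤ) * m) = T ^ (m - 1) * contK a b c p (l : ℤ) ∧
    contK a b c (p + 1) ((l : ℤ) * m - 1) =
      T ^ (m - 1) * contK a b c (p + 1) ((l : ℤ) - 1) :=
  contK_periodic_det_zero_general l a b c ha hb hc p T hT hD0 m hm
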